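/- Let ℓ be a nonzero linear form in n variables and let p = Σ_{k=1}^{s} g_k² be a sum of squares of real polynomials g_k. If ℓ divides p, then ℓ divides g_k for every k = 1,…,s, and consequently ℓ² divides p. -/

import Mathlib

open MvPolynomial

/-- A real polynomial is a sum of squares (sos) if it equals a finite sum of squares
of real polynomials. -/
def IsSos {n : ℕ} (p : MvPolynomial (Fin n) ℝ) : Prop :=
  ∃ (k : ℕ) (g : Fin k → MvPolynomial (Fin n) ℝ), p = ∑ i, g i ^ 2

/-- A real polynomial is positive semidefinite (psd) if it takes nonnegative values
at every real point. -/
def Psd {n : ℕ} (p : MvPolynomial (Fin n) ℝ) : Prop :=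
  ∀ x : Fin n → ℝ, 0 ≤ eval x p

private lemma aux_degree_one_single {σ : Type*} [DecidableEq σ] (d : σ →₀ ℕ) (h : d.degree = 1) :
    ∃ i, d = Finsupp.single i 1 := by
  have hd0 : d ≠ 0 := by
    intro h0; rw [h0, map_zero] at h; exact one_ne_zero h.symm
  obtain ⟨i, hi⟩ := Finsupp.ne_iff.mp hd0
  simp only [Finsupp.coe_zero, Pi.zero_apply] at hi
  have hle : d i ≤ 1 := h ▸ Finsupp.le_degree i d
  have hdi : d i = 1 := le_antisymm hle (Nat.one_le_iff_ne_zero.mpr hi)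
  refine ⟨i, Finsupp.ext fun j => ?_⟩
  rcases eq_or_ne j i with rfl | hj
  · simp [hdi]
  · rw [Finsupp.single_eq_of_ne' (Ne.symm hj)]
    by_contra hdj
    have hjs : j ∈ d.support := Finsupp.mem_support_iff.mpr hdj
    have his : i ∈ d.support := Finsupp.mem_support_iff.mpr hi
    have : d i + d j ≤ d.degree := by
      rw [Finsupp.degree_apply, ← Finset.add_sum_erase _ d his]
      exact add_le_add le_rfl (Finset.single_le_sum (fun _ _ => Nat.zero_le _)
        (Finset.mem_erase.mpr ⟨hj, hjs⟩))
    omega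

private lemma aux_sum_sq_eq_zero {m s : ℕ} (p : Fin s → MvPolynomial (Fin m) ℝ)
    (h : ∑ i, p i ^ 2 = 0) (k : Fin s) : p k = 0 := by
  apply MvPolynomial.funext
  intro x
  have h0 : ∑ i, (eval x (p i)) ^ 2 = 0 := by
    have := congrArg (eval x) h
    simpa [map_sum] using this
  have := (Finset.sum_eq_zero_iff_of_nonneg (fun i _ => sq_nonneg (eval x (p i)))).mp h0
    k (Finset.mem_univ k)
  have := pow_eq_zero_iff (n := 2) (by norm_num) |>.mp this
  simp [this]

private lemma aux_dvd_of_map {A B : Type*} [CommRing A] [CommRing B] (e : A ≃+* B)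
    {a b : A} (h : e a ∣ e b) : a ∣ b := by
  obtain ⟨c, hc⟩ := h
  exact ⟨e.symm c, by apply e.injective; rw [hc, map_mul, RingEquiv.apply_symm_apply]⟩

/-- Key substitution lemma: for a linear form `l` in `m+1` variables whose coefficient
of `x₀` is nonzero, divisibility by `l` is detected by substituting a root for `x₀`. -/
private lemma aux_exists_subst {m : ℕ} (l : MvPolynomial (Fin (m + 1)) ℝ)
    (hl : l.IsHomogeneous 1) (hc : coeff (Finsupp.single 0 1) l ≠ 0) :
    ∃ a : MvPolynomial (Fin m) ℝ, ∀ q : MvPolynomial (Fin (m + 1)) ℝ,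
      l ∣ q ↔ Polynomial.eval a (finSuccEquiv ℝ m q) = 0 := by
  set c := coeff (Finsupp.single 0 1) l with hcdef
  set l₂ := l - C c * X 0 with hl₂
  have hdeg : degreeOf 0 l₂ = 0 := by
    rw [degreeOf_eq_sup]
    refine Nat.le_zero.mp (Finset.sup_le fun d hd => ?_)
    rw [mem_support_iff] at hd
    rcases eq_or_ne d (Finsupp.single (0 : Fin (m+1)) 1) with rfl | hne
    · exfalso; apply hd
      simp [hl₂, coeff_C_mul, coeff_X', hcdef]
    · have hcl : coeff d l ≠ 0 := by
        intro h0
        apply hd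
        rw [hl₂, coeff_sub, coeff_C_mul, coeff_X', h0, if_neg (fun h => hne h.symm)]
        ring
      obtain ⟨i, rfl⟩ := aux_degree_one_single d (by rw [Finsupp.degree_eq_weight_one]; exact hl hcl)
      have : i ≠ 0 := fun h => hne (by rw [h])
      simp [Finsupp.single_eq_of_ne' this]
  have hnd : (finSuccEquiv ℝ m l₂).natDegree = 0 := by
    rw [natDegree_finSuccEquiv, hdeg]
  obtain ⟨b, hb⟩ := Polynomial.natDegree_eq_zero.mp hnd
  have hcu : IsUnit (Polynomial.C (C c : MvPolynomial (Fin m) ℝ)) :=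
    (isUnit_iff_ne_zero.mpr hc).map (Polynomial.C.comp (C : ℝ →+* MvPolynomial (Fin m) ℝ))
  refine ⟨C (-c⁻¹) * b, fun q => ?_⟩
  have hφl : finSuccEquiv ℝ m l =
      Polynomial.C (C c) * (Polynomial.X - Polynomial.C (C (-c⁻¹) * b)) := by
    have hlsplit : l = C c * X 0 + l₂ := by rw [hl₂]; ring
    rw [hlsplit, map_add, map_mul, finSuccEquiv_X_zero, hb.symm]
    have : finSuccEquiv ℝ m (C c) = Polynomial.C (C c) := by
      simp [finSuccEquiv_apply]
    rw [this, mul_sub, ← Polynomial.C_mul, ← mul_assoc, ← C_mul]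
    have : c * -c⁻¹ = -1 := by field_simp
    rw [this]
    simp [Polynomial.C_mul]
  constructor
  · rintro ⟨h, rfl⟩
    rw [map_mul, hφl, Polynomial.eval_mul, Polynomial.eval_mul]
    simp
  · intro hq
    have : Polynomial.X - Polynomial.C (C (-c⁻¹) * b) ∣ finSuccEquiv ℝ m q :=
      Polynomial.dvd_iff_isRoot.mpr hq
    have hdvd : finSuccEquiv ℝ m l ∣ finSuccEquiv ℝ m q := by
      rw [hφl]; exact hcu.mul_left_dvd.mpr this
    exact aux_dvd_of_map (finSuccEquiv ℝ m).toRingEquiv hdvd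

/-- If a nonzero linear form ℓ divides a sum of squares ∑ gₖ², then ℓ divides each gₖ,
and consequently ℓ² divides the sum. -/
theorem linear_divides_sos (n : ℕ) (l : MvPolynomial (Fin n) ℝ)
    (hl0 : l ≠ 0) (hl : l.IsHomogeneous 1)
    (s : ℕ) (g : Fin s → MvPolynomial (Fin n) ℝ)
    (hdvd : l ∣ ∑ k, g k ^ 2) :
    (∀ k, l ∣ g k) ∧ l ^ 2 ∣ ∑ k, g k ^ 2 := by
  have hmain : ∀ k, l ∣ g k := by
    -- first, find a variable with nonzero coefficient
    obtain ⟨d, hd⟩ := MvPolynomial.ne_zero_iff.mp hl0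
    obtain ⟨i, rfl⟩ := aux_degree_one_single d (by rw [Finsupp.degree_eq_weight_one]; exact hl hd)
    -- n must be positive
    cases n with
    | zero => exact i.elim0
    | succ m =>
      set e := renameEquiv ℝ (Equiv.swap (0 : Fin (m+1)) i) with he
      have hl' : (e l).IsHomogeneous 1 := hl.rename_isHomogeneous
      have hc' : coeff (Finsupp.single 0 1) (e l) ≠ 0 := by
        have : Finsupp.mapDomain (Equiv.swap (0 : Fin (m+1)) i) (Finsupp.single i 1)
            = Finsupp.single 0 1 := by
          rw [Finsupp.mapDomain_single, Equiv.swap_apply_right]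
        rw [he, renameEquiv_apply, ← this,
          coeff_rename_mapDomain _ (Equiv.swap (0 : Fin (m+1)) i).injective]
        exact hd
      obtain ⟨a, hiff⟩ := aux_exists_subst (e l) hl' hc'
      intro k
      have hdvd' : e l ∣ ∑ j, (e (g j)) ^ 2 := by
        have := map_dvd e hdvd
        simpa [map_sum] using this
      have hsum0 : Polynomial.eval a (finSuccEquiv ℝ m (∑ j, (e (g j)) ^ 2)) = 0 :=
        (hiff _).mp hdvd'
      have hzero : ∑ j, (Polynomial.eval a (finSuccEquiv ℝ m (e (g j)))) ^ 2 = 0 := by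
        rw [← hsum0, map_sum, Polynomial.eval_finset_sum]
        simp [map_pow]
      have hk0 : Polynomial.eval a (finSuccEquiv ℝ m (e (g k))) = 0 :=
        aux_sum_sq_eq_zero _ hzero k
      have : e l ∣ e (g k) := (hiff _).mpr hk0
      exact aux_dvd_of_map e.toRingEquiv this
  refine ⟨hmain, ?_⟩
  choose h hh using hmain
  refine ⟨∑ k, h k ^ 2, ?_⟩
  rw [Finset.mul_sum]
  exact Finset.sum_congr rfl fun k _ => by rw [hh k]; ring
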